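/- Every zero of Δ_L(k) = β_L cos(ak) sin(bk√(σ_L/σ_R)) + β_R √(σ_L/σ_R) sin(ak) cos(bk√(σ_L/σ_R)) is real, provided β_L, β_R, σ_L, σ_R, a, b are all positive reals. -/
import Mathlib

/-- Every zero of `Δ_L` is real. -/
theorem stmt_4 (a b βL βR σL σR : ℝ)
    (ha : 0 < a) (hb : 0 < b) (hβL : 0 < βL) (hβR : 0 < βR)
    (hσL : 0 < σL) (hσR : 0 < σR)
    (r : ℝ) (hr : r = Real.sqrt (σL / σR))
    (ΔL : ℂ → ℂ)
    (hΔ : ∀ k : ℂ, ΔL k =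
      (βL : ℂ) * Complex.cos (a * k) * Complex.sin (b * r * k)
        + (βR : ℂ) * (r : ℂ) * Complex.sin (a * k) * Complex.cos (b * r * k)) :
    ∀ k : ℂ, ΔL k = 0 → k.im = 0 := by
  intro k h0
  by_contra hy
  have hrpos : 0 < r := by
    rw [hr]; exact Real.sqrt_pos.mpr (div_pos hσL hσR)
  have heq : (βL : ℂ) * Complex.cos (a * k) * Complex.sin (b * r * k)
        + (βR : ℂ) * (r : ℂ) * Complex.sin (a * k) * Complex.cos (b * r * k) = 0 := by
    rw [← hΔ k]; exact h0
  set x := k.re with hx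
  set y := k.im with hyy
  have hk : k = (x:ℂ) + (y:ℂ) * Complex.I := (Complex.re_add_im k).symm
  have e1 : (a:ℂ) * k = ((a*x:ℝ):ℂ) + ((a*y:ℝ):ℂ) * Complex.I := by rw [hk]; push_cast; ring
  have e2 : (b:ℂ) * (r:ℂ) * k = ((b*r*x:ℝ):ℂ) + ((b*r*y:ℝ):ℂ) * Complex.I := by
    rw [hk]; push_cast; ring
  rw [e1, e2, Complex.sin_add_mul_I, Complex.cos_add_mul_I,
    Complex.sin_add_mul_I, Complex.cos_add_mul_I] at heq
  simp only [← Complex.ofReal_sin, ← Complex.ofReal_cos, ← Complex.ofReal_sinh,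
    ← Complex.ofReal_cosh] at heq
  rw [Complex.ext_iff] at heq
  obtain ⟨hre, him⟩ := heq
  simp only [Complex.add_re, Complex.add_im, Complex.mul_re, Complex.mul_im,
    Complex.ofReal_re, Complex.ofReal_im, Complex.sub_re, Complex.sub_im,
    Complex.I_re, Complex.I_im, Complex.zero_re, Complex.zero_im,
    zero_mul, mul_zero, sub_zero, zero_add, add_zero, zero_sub, mul_one, mul_neg, neg_neg,
    neg_zero] at hre him

  set s1 := Real.sin (a * x)
  set c1 := Real.cos (a * x)
  set S1 := Real.sinh (a * y)
  set C1 := Real.cosh (a * y)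
  set s2 := Real.sin (b * r * x)
  set c2 := Real.cos (b * r * x)
  set S2 := Real.sinh (b * r * y)
  set C2 := Real.cosh (b * r * y)
  have h1 : s1 ^ 2 + c1 ^ 2 = 1 := Real.sin_sq_add_cos_sq _
  have h2 : s2 ^ 2 + c2 ^ 2 = 1 := Real.sin_sq_add_cos_sq _
  have h3 : C1 ^ 2 - S1 ^ 2 = 1 := Real.cosh_sq_sub_sinh_sq _
  have h4 : C2 ^ 2 - S2 ^ 2 = 1 := Real.cosh_sq_sub_sinh_sq _
  have key : βL * (s2 ^ 2 + S2 ^ 2) * C1 * S1 + βR * r * (s1 ^ 2 + S1 ^ 2) * C2 * S2 = 0 := by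
    linear_combination (s1 * C1 * c2 * S2 + c1 * S1 * s2 * C2) * hre
      - (s1 * C1 * s2 * C2 - c1 * S1 * c2 * S2) * him
      + (-(βR * r) * S1 ^ 2 * c2 ^ 2 * S2 * C2 - βR * r * S1 ^ 2 * s2 ^ 2 * S2 * C2
         - βL * S1 * C1 * c2 ^ 2 * S2 ^ 2 - βL * S1 * C1 * s2 ^ 2 * C2 ^ 2) * h1
      + (-(βR * r) * S1 ^ 2 * S2 * C2 - βR * r * s1 ^ 2 * C1 ^ 2 * S2 * C2
         + βR * r * s1 ^ 2 * S1 ^ 2 * S2 * C2 - βL * S1 * C1 * S2 ^ 2) * h2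
      + (-(βR * r) * s1 ^ 2 * S2 * C2) * h3
      + (-(βL) * S1 * C1 * s2 ^ 2) * h4
  have hC1 : 0 < C1 := Real.cosh_pos _
  have hC2 : 0 < C2 := Real.cosh_pos _
  have hq2 : ∀ u v : ℝ, 0 < v ^ 2 → (0:ℝ) < u ^ 2 + v ^ 2 :=
    fun u v h => add_pos_of_nonneg_of_pos (sq_nonneg u) h
  rcases lt_or_gt_of_ne hy with hneg | hpos
  · have hv1 : a * y < 0 := mul_neg_of_pos_of_neg ha hneg
    have hv2 : b * r * y < 0 := mul_neg_of_pos_of_neg (mul_pos hb hrpos) hneg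
    have hS1 : S1 < 0 := Real.sinh_neg_iff.mpr hv1
    have hS2 : S2 < 0 := Real.sinh_neg_iff.mpr hv2
    have t1 : βL * (s2 ^ 2 + S2 ^ 2) * C1 * S1 < 0 :=
      mul_neg_of_pos_of_neg (mul_pos (mul_pos hβL (hq2 s2 S2 (by positivity))) hC1) hS1
    have t2 : βR * r * (s1 ^ 2 + S1 ^ 2) * C2 * S2 < 0 :=
      mul_neg_of_pos_of_neg (mul_pos (mul_pos (mul_pos hβR hrpos)
        (hq2 s1 S1 (by positivity))) hC2) hS2
    linarith
  · have hv1 : 0 < a * y := mul_pos ha hpos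
    have hv2 : 0 < b * r * y := mul_pos (mul_pos hb hrpos) hpos
    have hS1 : 0 < S1 := Real.sinh_pos_iff.mpr hv1
    have hS2 : 0 < S2 := Real.sinh_pos_iff.mpr hv2
    have t1 : 0 < βL * (s2 ^ 2 + S2 ^ 2) * C1 * S1 :=
      mul_pos (mul_pos (mul_pos hβL (hq2 s2 S2 (by positivity))) hC1) hS1
    have t2 : 0 < βR * r * (s1 ^ 2 + S1 ^ 2) * C2 * S2 :=
      mul_pos (mul_pos (mul_pos (mul_pos hβR hrpos) (hq2 s1 S1 (by positivity))) hC2) hS2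
    linarith
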